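/- arXiv:2007.10952 — 4 statements merged into one kernel-verified Lean document; each statement's English description precedes it below -/
import Mathlib

section
/- Lasso oracle inequality under weak sparsity (Theorem 1): Assume (i) S_λ := {j : |β⁰_j| > λ} is nonempty, (ii) the weak sparsity bound Σ_{j=1}^N |β⁰_j|^r ≤ s_r holds for some 0 ≤ r < 1 and s_r > 0, (iii) the compatibility condition holds for (Σ, S_λ) with constant φ² > 0, (iv) the covariance closeness bound ‖Σ̂ − Σ‖_∞ ≤ φ²/(32·|S_λ|) holds, and (v) the empirical process bound max_{1≤j≤N} |Σ_{t=1}^T u_t X_{t,j}| ≤ Tλ/4 holds. Then any lasso estimator β̂ satisfies ‖X(β̂ − β⁰)‖₂²/T + (λ/4)·‖β̂ − β⁰‖₁ ≤ (32/3)·λ^{2−r}·s_r/φ² + (8/3)·λ^{2−r}·s_r. -/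
/-!
Testing the optimality of `β̂` against `β̂ + s (β⁰ - β̂)` and letting `s → 0⁺` gives the basic
inequality `‖Xδ‖²/T ≤ (λ/4)‖δ‖₁ + λ(‖β⁰‖₁ - ‖β̂‖₁)` for `δ = β̂ - β⁰`, the noise term being
controlled by the empirical process bound. Splitting the `ℓ₁` norms over `S_λ` and its
complement, either `δ` lies in the cone `‖δ_{S_λᶜ}‖₁ ≤ 3‖δ_{S_λ}‖₁`, where the compatibility
condition (transferred from `Σ` to `Σ̂` at the cost of a factor `2` by the entrywise closeness)
bounds `‖δ_{S_λ}‖₁²` by `|S_λ| ‖Xδ‖²/T`, or the error is dominated by `λ ‖β⁰_{S_λᶜ}‖₁`.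
Weak sparsity finally bounds both `λ² |S_λ|` and `λ ‖β⁰_{S_λᶜ}‖₁` by `λ^{2-r} s_r`.
-/

open Finset Matrix Filter Topology Real

/-- `|b| ^ r` with the convention `0 ^ 0 = 0` (whereas `Real.rpow` has `0 ^ 0 = 1`), so that for
`r = 0` the weights count the nonzero entries. -/
noncomputable def sparsityWeight (r b : ℝ) : ℝ := if b = 0 then 0 else |b| ^ r

lemma sparsityWeight_nonneg (r b : ℝ) : 0 ≤ sparsityWeight r b := by
  unfold sparsityWeight; split_ifs <;> positivity

lemma sq_le_rpow_mul_sparsityWeight {lam r b : ℝ} (hlam : 0 < lam) (hr : 0 ≤ r)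
    (hb : lam < |b|) : lam ^ 2 ≤ lam ^ (2 - r) * sparsityWeight r b := by
  have hb0 : b ≠ 0 := by rintro rfl; rw [abs_zero] at hb; linarith
  rw [sparsityWeight, if_neg hb0]
  calc lam ^ 2 = lam ^ (2 - r) * lam ^ r := by rw [← rpow_add hlam, sub_add_cancel, rpow_two]
    _ ≤ lam ^ (2 - r) * |b| ^ r := by gcongr

lemma mul_abs_le_rpow_mul_sparsityWeight {lam r b : ℝ} (hlam : 0 < lam) (hr : r ≤ 1)
    (hb : |b| ≤ lam) : lam * |b| ≤ lam ^ (2 - r) * sparsityWeight r b := by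
  rcases eq_or_ne b 0 with rfl | hb0
  · simp [sparsityWeight]
  have hpos : 0 < |b| := abs_pos.mpr hb0
  have hr' : 0 ≤ 1 - r := by linarith
  rw [sparsityWeight, if_neg hb0]
  calc lam * |b| = lam * (|b| ^ (1 - r) * |b| ^ r) := by
        rw [← rpow_add hpos, sub_add_cancel, rpow_one]
    _ ≤ lam * (lam ^ (1 - r) * |b| ^ r) := by gcongr
    _ = lam ^ (2 - r) * |b| ^ r := by
        rw [show (2 : ℝ) - r = 1 + (1 - r) by ring, rpow_add hlam, rpow_one]; ring

section WeakSparsity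

variable {κ : Type*} [Fintype κ] {S : Finset κ} {b : κ → ℝ} {lam r s : ℝ}

lemma sum_sparsityWeight_le (hsum : ∑ j, sparsityWeight r (b j) ≤ s) (S : Finset κ) :
    ∑ j ∈ S, sparsityWeight r (b j) ≤ s :=
  (sum_le_univ_sum_of_nonneg fun _ => sparsityWeight_nonneg _ _).trans hsum

lemma sq_mul_card_le_rpow_mul (hlam : 0 < lam) (hr : 0 ≤ r) (hS : ∀ j ∈ S, lam < |b j|)
    (hsum : ∑ j, sparsityWeight r (b j) ≤ s) : lam ^ 2 * #S ≤ lam ^ (2 - r) * s :=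
  calc lam ^ 2 * #S = ∑ _j ∈ S, lam ^ 2 := by rw [sum_const, nsmul_eq_mul, mul_comm]
    _ ≤ ∑ j ∈ S, lam ^ (2 - r) * sparsityWeight r (b j) :=
        sum_le_sum fun j hj => sq_le_rpow_mul_sparsityWeight hlam hr (hS j hj)
    _ ≤ lam ^ (2 - r) * s := by
        rw [← mul_sum]; gcongr; exact sum_sparsityWeight_le hsum S

lemma mul_sum_abs_le_rpow_mul (hlam : 0 < lam) (hr : r ≤ 1) (hS : ∀ j ∈ S, |b j| ≤ lam)
    (hsum : ∑ j, sparsityWeight r (b j) ≤ s) : lam * ∑ j ∈ S, |b j| ≤ lam ^ (2 - r) * s :=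
  calc lam * ∑ j ∈ S, |b j| ≤ ∑ j ∈ S, lam ^ (2 - r) * sparsityWeight r (b j) := by
        rw [mul_sum]
        exact sum_le_sum fun j hj => mul_abs_le_rpow_mul_sparsityWeight hlam hr (hS j hj)
    _ ≤ lam ^ (2 - r) * s := by
        rw [← mul_sum]; gcongr; exact sum_sparsityWeight_le hsum S

end WeakSparsity

lemma convexOn_sum_abs {κ : Type*} [Fintype κ] :
    ConvexOn ℝ Set.univ fun β : κ → ℝ => ∑ j, |β j| := by
  refine ⟨convex_univ, fun x _ y _ a b ha hb _ => ?_⟩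
  simp only [Pi.add_apply, Pi.smul_apply, smul_eq_mul, mul_sum, ← sum_add_distrib]
  refine sum_le_sum fun j _ => (abs_add_le _ _).trans_eq ?_
  rw [abs_mul, abs_mul, abs_of_nonneg ha, abs_of_nonneg hb]

section LeastSquares

variable {ι κ : Type*} [Fintype ι] [Fintype κ]

lemma sum_mul_mulVec_le (X : Matrix ι κ ℝ) (u : ι → ℝ) (v : κ → ℝ) {a : ℝ}
    (hu : ∀ j, |∑ t, u t * X t j| ≤ a) : ∑ t, u t * (X *ᵥ v) t ≤ a * ∑ j, |v j| :=
  calc ∑ t, u t * (X *ᵥ v) t = ∑ j, (u ᵥ* X) j * v j := dotProduct_mulVec u X v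
    _ ≤ ∑ j, a * |v j| := sum_le_sum fun j _ => (le_abs_self _).trans <| by
        rw [abs_mul]; exact mul_le_mul_of_nonneg_right (hu j) (abs_nonneg _)
    _ = a * ∑ j, |v j| := (mul_sum ..).symm

lemma sum_sum_mul_gram_div_mul (X : Matrix ι κ ℝ) (c : ℝ) (z : κ → ℝ) :
    ∑ i, ∑ k, z i * ((Xᵀ * X) i k / c) * z k = (∑ t, (X *ᵥ z) t ^ 2) / c :=
  calc ∑ i, ∑ k, z i * ((Xᵀ * X) i k / c) * z k = z ⬝ᵥ ((Xᵀ * X) *ᵥ z) / c := by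
        simp only [dotProduct, mulVec, mul_sum, sum_div]
        exact sum_congr rfl fun i _ => sum_congr rfl fun k _ => by ring
    _ = (X *ᵥ z) ⬝ᵥ (X *ᵥ z) / c := by
        rw [← mulVec_mulVec, dotProduct_mulVec, vecMul_transpose]
    _ = (∑ t, (X *ᵥ z) t ^ 2) / c := by simp only [dotProduct, sq]

theorem two_mul_sum_residual_mul_div_le {X : Matrix ι κ ℝ} {y : ι → ℝ} {P : (κ → ℝ) → ℝ}
    {c : ℝ} {βhat : κ → ℝ} (hP : ConvexOn ℝ Set.univ P)
    (hmin : ∀ β, (∑ t, (y t - (X *ᵥ βhat) t) ^ 2) / c + P βhat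
      ≤ (∑ t, (y t - (X *ᵥ β) t) ^ 2) / c + P β) (β : κ → ℝ) :
    2 * (∑ t, (y t - (X *ᵥ βhat) t) * (X *ᵥ (β - βhat)) t) / c ≤ P β - P βhat := by
  set g := ∑ t, (y t - (X *ᵥ βhat) t) * (X *ᵥ (β - βhat)) t
  set q := ∑ t, (X *ᵥ (β - βhat)) t ^ 2
  have hstep : ∀ s ∈ Set.Ioo (0 : ℝ) 1, 2 * g / c ≤ P β - P βhat + s * (q / c) := by
    rintro s ⟨hs0, hs1⟩
    have hrss : ∑ t, (y t - (X *ᵥ (βhat + s • (β - βhat))) t) ^ 2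
        = ∑ t, (y t - (X *ᵥ βhat) t) ^ 2 - 2 * s * g + s ^ 2 * q := by
      simp only [g, q, mulVec_add, mulVec_smul, Pi.add_apply, Pi.smul_apply, smul_eq_mul,
        mul_sum, ← sum_sub_distrib, ← sum_add_distrib]
      exact sum_congr rfl fun t _ => by ring
    have hpen : P (βhat + s • (β - βhat)) ≤ (1 - s) * P βhat + s * P β := by
      have h := hP.2 (Set.mem_univ βhat) (Set.mem_univ β) (by linarith : 0 ≤ 1 - s) hs0.le
        (by ring)
      rwa [show (1 - s) • βhat + s • β = βhat + s • (β - βhat) by module] at h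
    have h := hmin (βhat + s • (β - βhat))
    rw [hrss, show ∀ A : ℝ, (A - 2 * s * g + s ^ 2 * q) / c
      = A / c - s * (2 * g / c) + s * (s * (q / c)) by intro A; ring] at h
    have : s * (2 * g / c) ≤ s * (P β - P βhat + s * (q / c)) := by linarith
    exact le_of_mul_le_mul_left this hs0
  have hlim : Tendsto (fun s : ℝ => P β - P βhat + s * (q / c)) (𝓝[>] 0)
      (𝓝 (P β - P βhat)) := by
    have : Continuous fun s : ℝ => P β - P βhat + s * (q / c) := by fun_prop
    simpa using (this.tendsto 0).mono_left nhdsWithin_le_nhds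
  exact ge_of_tendsto hlim (eventually_of_mem (Ioo_mem_nhdsGT one_pos) hstep)

end LeastSquares

theorem lasso_basic_inequality {ι κ : Type*} [Fintype ι] [Fintype κ] {X : Matrix ι κ ℝ}
    {β0 βhat : κ → ℝ} {u y : ι → ℝ} {c lam : ℝ} (hc : 0 < c) (hlam : 0 ≤ lam)
    (hy : y = X *ᵥ β0 + u) (hemp : ∀ j, |∑ t, u t * X t j| ≤ c * lam / 4)
    (hmin : ∀ β, (∑ t, (y t - (X *ᵥ βhat) t) ^ 2) / c + 2 * lam * ∑ j, |βhat j|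
      ≤ (∑ t, (y t - (X *ᵥ β) t) ^ 2) / c + 2 * lam * ∑ j, |β j|) :
    (∑ t, (X *ᵥ (βhat - β0)) t ^ 2) / c
      ≤ lam / 4 * ∑ j, |βhat j - β0 j| + lam * (∑ j, |β0 j| - ∑ j, |βhat j|) := by
  have hvar := two_mul_sum_residual_mul_div_le (P := fun β => 2 * lam * ∑ j, |β j|)
    (convexOn_sum_abs.smul (by positivity)) hmin β0
  have hres : ∑ t, (y t - (X *ᵥ βhat) t) * (X *ᵥ (β0 - βhat)) t
      = ∑ t, (X *ᵥ (βhat - β0)) t ^ 2 - ∑ t, u t * (X *ᵥ (βhat - β0)) t := by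
    rw [← sum_sub_distrib]
    refine sum_congr rfl fun t _ => ?_
    simp only [hy, mulVec_sub, Pi.add_apply, Pi.sub_apply]
    ring
  have hnoise : (∑ t, u t * (X *ᵥ (βhat - β0)) t) / c ≤ lam / 4 * ∑ j, |βhat j - β0 j| := by
    have h := sum_mul_mulVec_le X u (βhat - β0) hemp
    simp only [Pi.sub_apply] at h
    rw [div_le_iff₀ hc]
    linarith
  rw [hres] at hvar
  simp only [mul_sub, sub_div, mul_div_assoc] at hvar
  linarith

theorem sum_abs_sub_sum_abs_le {ι : Type*} [Fintype ι] [DecidableEq ι] (S : Finset ι)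
    (a b : ι → ℝ) :
    ∑ j, |b j| - ∑ j, |a j|
      ≤ ∑ j ∈ S, |a j - b j| - ∑ j ∈ Sᶜ, |a j - b j| + 2 * ∑ j ∈ Sᶜ, |b j| := by
  rw [← sum_add_sum_compl S fun j => |b j|, ← sum_add_sum_compl S fun j => |a j|]
  have hS : ∑ j ∈ S, |b j| - ∑ j ∈ S, |a j| ≤ ∑ j ∈ S, |a j - b j| := by
    rw [← sum_sub_distrib]
    exact sum_le_sum fun j _ => (abs_sub_abs_le_abs_sub _ _).trans_eq (abs_sub_comm _ _)
  have hSc : ∑ j ∈ Sᶜ, |a j - b j| ≤ ∑ j ∈ Sᶜ, |a j| + ∑ j ∈ Sᶜ, |b j| := by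
    rw [← sum_add_distrib]
    exact sum_le_sum fun j _ => abs_sub _ _
  linarith

theorem abs_sum_sum_mul_mul_le {κ : Type*} [Fintype κ] {A : Matrix κ κ ℝ} {ε : ℝ}
    (hA : ∀ i k, |A i k| ≤ ε) (z : κ → ℝ) :
    |∑ i, ∑ k, z i * A i k * z k| ≤ ε * (∑ j, |z j|) ^ 2 :=
  calc |∑ i, ∑ k, z i * A i k * z k| ≤ ∑ i, ∑ k, |z i| * ε * |z k| := by
        refine (abs_sum_le_sum_abs _ _).trans (sum_le_sum fun i _ =>
          (abs_sum_le_sum_abs _ _).trans (sum_le_sum fun k _ => ?_))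
        rw [abs_mul, abs_mul]
        gcongr
        exact hA i k
    _ = ε * (∑ j, |z j|) ^ 2 := by
        rw [sq, sum_mul_sum, mul_sum]
        exact sum_congr rfl fun i _ => by rw [mul_sum]; exact sum_congr rfl fun k _ => by ring

section Compatibility

variable {κ : Type*} [Fintype κ] [DecidableEq κ]

def CompatibilityCondition (Sig : Matrix κ κ ℝ) (S : Finset κ) (φsq : ℝ) : Prop :=
  ∀ z : κ → ℝ, ∑ j ∈ Sᶜ, |z j| ≤ 3 * ∑ j ∈ S, |z j| →
    (∑ j ∈ S, |z j|) ^ 2 ≤ #S * (∑ i, ∑ k, z i * Sig i k * z k) / φsq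

theorem CompatibilityCondition.of_abs_sub_le {Sig Sig' : Matrix κ κ ℝ} {S : Finset κ}
    {φsq : ℝ} (hφ : 0 < φsq) (h : CompatibilityCondition Sig S φsq)
    (hclose : ∀ i k, |Sig' i k - Sig i k| ≤ φsq / (32 * #S)) :
    CompatibilityCondition Sig' S (φsq / 2) := by
  intro z hz
  set a := ∑ j ∈ S, |z j|
  have hl1 : (∑ j, |z j|) ^ 2 ≤ 16 * a ^ 2 := by
    have : ∑ j, |z j| ≤ 4 * a := by rw [← sum_add_sum_compl S]; linarith
    exact (pow_le_pow_left₀ (sum_nonneg fun j _ => abs_nonneg (z j)) this 2).trans_eq (by ring)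
  have hcard : (#S : ℝ) * (φsq / (32 * #S)) ≤ φsq / 32 := by
    rcases (Nat.cast_nonneg (α := ℝ) #S).eq_or_lt with h0 | h0
    · rw [← h0, zero_mul]; positivity
    · exact (by field_simp : (#S : ℝ) * (φsq / (32 * #S)) = φsq / 32).le
  have hdiff : #S * ∑ i, ∑ k, z i * (Sig - Sig') i k * z k ≤ φsq / 2 * a ^ 2 :=
    calc _ ≤ #S * (φsq / (32 * #S) * (∑ j, |z j|) ^ 2) := by
          gcongr
          exact (le_abs_self _).trans <| abs_sum_sum_mul_mul_le
            (fun i k => (abs_sub_comm _ _).trans_le (hclose i k)) z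
      _ ≤ φsq / 32 * (16 * a ^ 2) := by
          rw [← mul_assoc]; exact mul_le_mul hcard hl1 (sq_nonneg _) (by positivity)
      _ = φsq / 2 * a ^ 2 := by ring
  have hsplit : ∑ i, ∑ k, z i * Sig i k * z k = ∑ i, ∑ k, z i * Sig' i k * z k
      + ∑ i, ∑ k, z i * (Sig - Sig') i k * z k := by
    simp only [Matrix.sub_apply, mul_sub, sub_mul, sum_sub_distrib]; ring
  have hcompat : a ^ 2 * φsq ≤ #S * ∑ i, ∑ k, z i * Sig i k * z k :=
    (le_div_iff₀ hφ).mp (h z hz)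
  rw [hsplit, mul_add] at hcompat
  rw [le_div_iff₀ (by positivity)]
  linarith

end Compatibility

theorem le_of_sq_le_mul_of_le_mul_add {W x M c b : ℝ} (hW : 0 ≤ W) (hM : 0 ≤ M)
    (hx : x ^ 2 ≤ M * W) (hWle : W ≤ c * x + b) : W ≤ 4 / 3 * (M * c ^ 2 + b) := by
  have hcx : c * x ≤ W / 4 + M * c ^ 2 := by
    rcases hM.eq_or_lt with rfl | hM
    · obtain rfl : x = 0 := pow_eq_zero_iff two_ne_zero |>.mp
        (le_antisymm (by simpa using hx) (sq_nonneg x))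
      linarith
    · refine le_of_mul_le_mul_left ?_ hM
      nlinarith [sq_nonneg (x - 2 * c * M)]
  linarith

theorem lasso_error_le_of_compatibility {κ : Type*} [Fintype κ] [DecidableEq κ]
    {Sig : Matrix κ κ ℝ} {S : Finset κ} {φsq lam Q : ℝ} {β0 βhat : κ → ℝ} (hφ : 0 < φsq)
    (hlam : 0 ≤ lam) (hcompat : CompatibilityCondition Sig S φsq)
    (hQ : ∑ i, ∑ k, (βhat i - β0 i) * Sig i k * (βhat k - β0 k) = Q) (hQ0 : 0 ≤ Q)
    (hbasic : Q ≤ lam / 4 * ∑ j, |βhat j - β0 j| + lam * (∑ j, |β0 j| - ∑ j, |βhat j|)) :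
    Q + lam / 4 * ∑ j, |βhat j - β0 j|
      ≤ 3 * lam ^ 2 * #S / φsq + 8 / 3 * (lam * ∑ j ∈ Sᶜ, |β0 j|) := by
  set δS := ∑ j ∈ S, |βhat j - β0 j|
  set δC := ∑ j ∈ Sᶜ, |βhat j - β0 j|
  set PC := ∑ j ∈ Sᶜ, |β0 j|
  have hδC : 0 ≤ δC := sum_nonneg fun _ _ => abs_nonneg _
  have hPC : 0 ≤ PC := sum_nonneg fun _ _ => abs_nonneg _
  have hrhs : 0 ≤ 3 * lam ^ 2 * #S / φsq := by positivity
  have htot : ∑ j, |βhat j - β0 j| = δS + δC := (sum_add_sum_compl S _).symm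
  rw [htot] at hbasic ⊢
  have hW : Q + lam / 4 * (δS + δC) ≤ 3 / 2 * lam * δS - 1 / 2 * lam * δC + 2 * lam * PC := by
    linarith [mul_le_mul_of_nonneg_left (sum_abs_sub_sum_abs_le S βhat β0) hlam]
  by_cases hcone : δC ≤ 3 * δS
  · have hx : δS ^ 2 ≤ #S * Q / φsq := by rw [← hQ]; exact hcompat (βhat - β0) hcone
    have hx' : δS ^ 2 ≤ #S / φsq * (Q + lam / 4 * (δS + δC)) := by
      refine hx.trans ?_
      rw [div_mul_eq_mul_div]
      gcongr
      exact le_add_of_nonneg_right (by positivity)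
    calc _ ≤ 4 / 3 * (#S / φsq * (3 / 2 * lam) ^ 2 + 2 * lam * PC) :=
          le_of_sq_le_mul_of_le_mul_add (by positivity) (by positivity) hx'
            (by linarith [mul_nonneg hlam hδC])
      _ = _ := by ring
  · linarith [mul_le_mul_of_nonneg_left (not_le.mp hcone).le hlam, mul_nonneg hlam hPC]

theorem lasso_oracle_weak_sparsity_general
    {T N : ℕ} (hT : 0 < T)
    (X : Matrix (Fin T) (Fin N) ℝ) (β0 βhat : Fin N → ℝ) (u y : Fin T → ℝ)
    (hy : y = X.mulVec β0 + u)
    (Sig : Matrix (Fin N) (Fin N) ℝ)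
    (lam r sr φ : ℝ) (hlam : 0 < lam) (hr0 : 0 ≤ r) (hr1 : r < 1)
    (hsr : 0 < sr) (hφ : 0 < φ)
    (Slam : Finset (Fin N)) (hSlam : Slam = Finset.univ.filter fun j => lam < |β0 j|)
    -- (ii) weak sparsity: ∑_j |β⁰_j|^r ≤ s_r  (with |c|^0 read as 1 if c ≠ 0, else 0)
    (hsparse : ∑ j, (if β0 j = 0 then (0:ℝ) else |β0 j| ^ r) ≤ sr)
    -- (iii) compatibility condition for (Σ, S_λ) with constant φ² > 0
    (hcompat : ∀ z : Fin N → ℝ,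
      (∑ j ∈ Slamᶜ, |z j|) ≤ 3 * ∑ j ∈ Slam, |z j| →
      (∑ j ∈ Slam, |z j|) ^ 2 ≤
        (Slam.card : ℝ) * (∑ i, ∑ k, z i * Sig i k * z k) / φ ^ 2)
    -- (iv) covariance closeness ‖Σ̂ − Σ‖_∞ ≤ φ²/(32|S_λ|)
    (hclose : ∀ i k, |(X.transpose * X) i k / (T : ℝ) - Sig i k| ≤
      φ ^ 2 / (32 * (Slam.card : ℝ)))
    -- (v) empirical process bound
    (hemp : ∀ j, |∑ t, u t * X t j| ≤ (T : ℝ) * lam / 4)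
    -- βhat is a lasso estimator
    (hmin : ∀ β : Fin N → ℝ,
      (∑ t, (y t - X.mulVec βhat t) ^ 2) / (T : ℝ) + 2 * lam * ∑ j, |βhat j|
        ≤ (∑ t, (y t - X.mulVec β t) ^ 2) / (T : ℝ) + 2 * lam * ∑ j, |β j|) :
    (∑ t, (X.mulVec (βhat - β0) t) ^ 2) / (T : ℝ)
        + (lam / 4) * ∑ j, |βhat j - β0 j|
      ≤ (32 / 3) * lam ^ (2 - r) * sr / φ ^ 2 + (8 / 3) * lam ^ (2 - r) * sr := by
  have hT' : (0 : ℝ) < T := Nat.cast_pos.mpr hT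
  have hmem : ∀ j, j ∈ Slam ↔ lam < |β0 j| := by simp [hSlam]
  have hcompatHat :
      CompatibilityCondition (Matrix.of fun i k => (Xᵀ * X) i k / T) Slam (φ ^ 2 / 2) :=
    CompatibilityCondition.of_abs_sub_le (by positivity) hcompat hclose
  have herr := lasso_error_le_of_compatibility (by positivity) hlam.le hcompatHat
    (sum_sum_mul_gram_div_mul X T (βhat - β0)) (by positivity)
    (lasso_basic_inequality hT' hlam.le hy hemp hmin)
  have hS := sq_mul_card_le_rpow_mul hlam hr0 (fun j hj => (hmem j).mp hj) hsparse
  have hC := mul_sum_abs_le_rpow_mul hlam hr1.le (S := Slamᶜ)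
    (fun j hj => not_lt.mp ((hmem j).not.mp (mem_compl.mp hj))) hsparse
  calc _ ≤ 3 * lam ^ 2 * #Slam / (φ ^ 2 / 2) + 8 / 3 * (lam * ∑ j ∈ Slamᶜ, |β0 j|) := herr
    _ ≤ 6 * (lam ^ (2 - r) * sr) / φ ^ 2 + 8 / 3 * (lam ^ (2 - r) * sr) := by
        rw [div_div_eq_mul_div]
        exact add_le_add (div_le_div_of_nonneg_right (by linarith) (by positivity))
          (by linarith)
    _ ≤ _ := by
        rw [mul_assoc (8 / 3 : ℝ), mul_assoc (32 / 3 : ℝ)]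
        gcongr
        norm_num

/-- **Lasso oracle inequality under weak sparsity (Theorem 1).**
`X` is the `T × N` design matrix, `y = X β⁰ + u`, `Σ̂ = XᵀX/T`, `Sig` is the population
covariance matrix, `Slam = {j : |β⁰_j| > λ}` is the weak sparsity index set, and `βhat` is
any lasso estimator with tuning parameter `lam`. -/
theorem lasso_oracle_weak_sparsity
    {T N : ℕ} (hT : 0 < T)
    (X : Matrix (Fin T) (Fin N) ℝ) (β0 βhat : Fin N → ℝ) (u y : Fin T → ℝ)
    (hy : y = X.mulVec β0 + u)
    (Sig : Matrix (Fin N) (Fin N) ℝ) (hSigSymm : Sig.IsSymm)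
    (lam r sr φ : ℝ) (hlam : 0 < lam) (hr0 : 0 ≤ r) (hr1 : r < 1)
    (hsr : 0 < sr) (hφ : 0 < φ)
    (Slam : Finset (Fin N)) (hSlam : Slam = Finset.univ.filter fun j => lam < |β0 j|)
    -- (i) S_λ nonempty
    (hSne : Slam.Nonempty)
    -- (ii) weak sparsity: ∑_j |β⁰_j|^r ≤ s_r  (with |c|^0 read as 1 if c ≠ 0, else 0)
    (hsparse : ∑ j, (if β0 j = 0 then (0:ℝ) else |β0 j| ^ r) ≤ sr)
    -- (iii) compatibility condition for (Σ, S_λ) with constant φ² > 0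
    (hcompat : ∀ z : Fin N → ℝ,
      (∑ j ∈ Slamᶜ, |z j|) ≤ 3 * ∑ j ∈ Slam, |z j| →
      (∑ j ∈ Slam, |z j|) ^ 2 ≤
        (Slam.card : ℝ) * (∑ i, ∑ k, z i * Sig i k * z k) / φ ^ 2)
    -- (iv) covariance closeness ‖Σ̂ − Σ‖_∞ ≤ φ²/(32|S_λ|)
    (hclose : ∀ i k, |(X.transpose * X) i k / (T : ℝ) - Sig i k| ≤
      φ ^ 2 / (32 * (Slam.card : ℝ)))
    -- (v) empirical process bound
    (hemp : ∀ j, |∑ t, u t * X t j| ≤ (T : ℝ) * lam / 4)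
    -- βhat is a lasso estimator
    (hmin : ∀ β : Fin N → ℝ,
      (∑ t, (y t - X.mulVec βhat t) ^ 2) / (T : ℝ) + 2 * lam * ∑ j, |βhat j|
        ≤ (∑ t, (y t - X.mulVec β t) ^ 2) / (T : ℝ) + 2 * lam * ∑ j, |β j|) :
    (∑ t, (X.mulVec (βhat - β0) t) ^ 2) / (T : ℝ)
        + (lam / 4) * ∑ j, |βhat j - β0 j|
      ≤ (32 / 3) * lam ^ (2 - r) * sr / φ ^ 2 + (8 / 3) * lam ^ (2 - r) * sr :=
  lasso_oracle_weak_sparsity_general hT X β0 βhat u y hy Sig lam r sr φ hlam hr0 hr1 hsr hφ Slam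
    hSlam hsparse hcompat hclose hemp hmin
end

section
/- Transfer of the compatibility condition from the population to the sample covariance matrix (Lemma A.2): Let S ⊆ {1,…,N} be nonempty, and suppose the compatibility condition holds for (Σ, S) with constant φ² > 0, i.e. ‖z_S‖₁² ≤ |S|·(zᵀΣz)/φ² for all z ∈ ℝ^N with ‖z_{S^c}‖₁ ≤ 3‖z_S‖₁. If ‖Σ̂ − Σ‖_∞ ≤ φ²/(32·|S|), then for all z ∈ ℝ^N with ‖z_{S^c}‖₁ ≤ 3‖z_S‖₁ one has ‖z_S‖₁ ≤ √(2·|S|·zᵀΣ̂z)/φ. -/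
/-!
On the cone `‖z_{Sᶜ}‖₁ ≤ 3‖z_S‖₁` one has `‖z‖₁ ≤ 4‖z_S‖₁`, so an entrywise perturbation of size
`λ = φ²/(32|S|)` changes the quadratic form by at most `λ‖z‖₁² ≤ 16λ‖z_S‖₁² = φ²‖z_S‖₁²/(2|S|)`.
By the compatibility condition for `Σ` this is at most half of `zᵀΣz`, hence
`φ²‖z_S‖₁² ≤ |S| zᵀΣz ≤ 2|S| zᵀΣ̂z`.
-/

open Finset

variable {ι : Type*} [Fintype ι]

def quadForm (A : Matrix ι ι ℝ) (z : ι → ℝ) : ℝ := ∑ i, ∑ k, z i * A i k * z k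

lemma abs_quadForm_sub_le {A B : Matrix ι ι ℝ} {c : ℝ} (hAB : ∀ i k, |A i k - B i k| ≤ c)
    (z : ι → ℝ) : |quadForm A z - quadForm B z| ≤ c * (∑ i, |z i|) ^ 2 := by
  have hsub : quadForm A z - quadForm B z = ∑ i, ∑ k, z i * (A i k - B i k) * z k := by
    simp only [quadForm, ← sum_sub_distrib, mul_sub, sub_mul]
  calc |quadForm A z - quadForm B z|
      ≤ ∑ i, ∑ k, |z i * (A i k - B i k) * z k| := by
        rw [hsub]
        exact (abs_sum_le_sum_abs _ _).trans (sum_le_sum fun i _ => abs_sum_le_sum_abs _ _)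
    _ ≤ ∑ i, ∑ k, c * (|z i| * |z k|) := by
        gcongr with i _ k _
        rw [abs_mul, abs_mul, mul_comm c, mul_right_comm]
        gcongr
        exact hAB i k
    _ = c * (∑ i, |z i|) ^ 2 := by
        rw [sq, sum_mul_sum, mul_sum]
        simp only [mul_sum]

lemma sum_abs_le_four_mul_of_cone [DecidableEq ι] {S : Finset ι} {z : ι → ℝ}
    (hcone : ∑ j ∈ Sᶜ, |z j| ≤ 3 * ∑ j ∈ S, |z j|) :
    ∑ i, |z i| ≤ 4 * ∑ j ∈ S, |z j| := by
  rw [← sum_add_sum_compl S]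
  linarith

lemma mul_div_le_of_nonneg {x y : ℝ} (hx : 0 ≤ x) (hy : 0 ≤ y) : x * (y / x) ≤ y := by
  rcases hx.eq_or_lt with rfl | hx
  · simpa using hy
  · rw [mul_div_cancel₀ y hx.ne']

theorem compatibility_transfer_general
    {N : ℕ} (Sig Sighat : Matrix (Fin N) (Fin N) ℝ)
    (S : Finset (Fin N)) (φ : ℝ) (hφ : 0 < φ)
    -- compatibility condition for (Σ, S) with constant φ² > 0
    (hcompat : ∀ z : Fin N → ℝ,
      (∑ j ∈ Sᶜ, |z j|) ≤ 3 * ∑ j ∈ S, |z j| →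
      (∑ j ∈ S, |z j|) ^ 2 ≤
        (S.card : ℝ) * (∑ i, ∑ k, z i * Sig i k * z k) / φ ^ 2)
    -- covariance closeness ‖Σ̂ − Σ‖_∞ ≤ φ²/(32|S|)
    (hclose : ∀ i k, |Sighat i k - Sig i k| ≤ φ ^ 2 / (32 * (S.card : ℝ))) :
    ∀ z : Fin N → ℝ,
      (∑ j ∈ Sᶜ, |z j|) ≤ 3 * ∑ j ∈ S, |z j| →
      ∑ j ∈ S, |z j| ≤
        Real.sqrt (2 * (S.card : ℝ) * (∑ i, ∑ k, z i * Sighat i k * z k)) / φ := by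
  intro z hcone
  change _ ≤ √(2 * _ * quadForm Sighat z) / φ
  set a := ∑ j ∈ S, |z j|
  set s : ℝ := (S.card : ℝ)
  have hs : 0 ≤ s := Nat.cast_nonneg _
  have ha : 0 ≤ a := sum_nonneg fun j _ => abs_nonneg (z j)
  have hcompat_z : φ ^ 2 * a ^ 2 ≤ s * quadForm Sig z := by
    have h : a ^ 2 ≤ s * quadForm Sig z / φ ^ 2 := hcompat z hcone
    rw [le_div_iff₀ (by positivity)] at h
    linarith
  have hpert : quadForm Sig z - quadForm Sighat z ≤ φ ^ 2 / (32 * s) * (4 * a) ^ 2 := by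
    calc _ ≤ |quadForm Sighat z - quadForm Sig z| := by rw [abs_sub_comm]; exact le_abs_self _
      _ ≤ φ ^ 2 / (32 * s) * (∑ i, |z i|) ^ 2 := abs_quadForm_sub_le hclose z
      _ ≤ _ := by
        gcongr
        exact sum_abs_le_four_mul_of_cone hcone
  -- an equality unless `S = ∅`, where the division by zero gives `0`
  have hscale : 32 * s * (φ ^ 2 / (32 * s)) ≤ φ ^ 2 :=
    mul_div_le_of_nonneg (by positivity) (sq_nonneg φ)
  have hkey : (a * φ) ^ 2 ≤ 2 * s * quadForm Sighat z := by nlinarith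
  rw [le_div_iff₀ hφ]
  exact (Real.le_sqrt (by positivity) ((sq_nonneg _).trans hkey)).mpr hkey

/-- **Transfer of the compatibility condition from the population to the sample
covariance matrix (Lemma A.2).** -/
theorem compatibility_transfer
    {N : ℕ} (Sig Sighat : Matrix (Fin N) (Fin N) ℝ)
    (hSigSymm : Sig.IsSymm) (hSighatSymm : Sighat.IsSymm)
    (hSigPSD : ∀ z : Fin N → ℝ, 0 ≤ ∑ i, ∑ k, z i * Sig i k * z k)
    (hSighatPSD : ∀ z : Fin N → ℝ, 0 ≤ ∑ i, ∑ k, z i * Sighat i k * z k)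
    (S : Finset (Fin N)) (hSne : S.Nonempty) (φ : ℝ) (hφ : 0 < φ)
    -- compatibility condition for (Σ, S) with constant φ² > 0
    (hcompat : ∀ z : Fin N → ℝ,
      (∑ j ∈ Sᶜ, |z j|) ≤ 3 * ∑ j ∈ S, |z j| →
      (∑ j ∈ S, |z j|) ^ 2 ≤
        (S.card : ℝ) * (∑ i, ∑ k, z i * Sig i k * z k) / φ ^ 2)
    -- covariance closeness ‖Σ̂ − Σ‖_∞ ≤ φ²/(32|S|)
    (hclose : ∀ i k, |Sighat i k - Sig i k| ≤ φ ^ 2 / (32 * (S.card : ℝ))) :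
    ∀ z : Fin N → ℝ,
      (∑ j ∈ Sᶜ, |z j|) ≤ 3 * ∑ j ∈ S, |z j| →
      ∑ j ∈ S, |z j| ≤
        Real.sqrt (2 * (S.card : ℝ) * (∑ i, ∑ k, z i * Sighat i k * z k)) / φ :=
  compatibility_transfer_general Sig Sighat S φ hφ hcompat hclose
end

section
/- Norm bound for the population nodewise coefficient vector: Let Σ be a symmetric positive definite N×N real matrix with N ≥ 2 and smallest eigenvalue Λ_min > 0. Fix j ∈ {1,…,N}, and let γ_j := (Σ_{−j,−j})⁻¹Σ_{−j,j} and τ_j² := Σ_{jj} − Σ_{j,−j}(Σ_{−j,−j})⁻¹Σ_{−j,j}. Then 1 + ‖γ_j‖₂² ≤ τ_j⁴ / Λ_min²; in particular ‖γ_j‖₂ ≤ τ_j² / Λ_min. -/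
/-!
Write `v` for the vector with `v j = 1` and `v k = -γ k` for `k ≠ j`. The normal equations
`Σ_{−j,−j} γ = Σ_{−j,j}` say exactly that `Σ v = τ² e_j`, so `vᵀ Σ v = τ²`, while `‖v‖² = 1 + ‖γ‖²`.
The Rayleigh bound `Λ_min ‖v‖² ≤ vᵀ Σ v` then gives `1 + ‖γ‖² ≤ τ² / Λ_min`; as the left side is at
least `1`, so is `τ² / Λ_min`, and squaring only weakens the bound.
-/

open Finset Matrix
open scoped ComplexOrder

namespace Matrix

variable {n : Type*} [Fintype n] [DecidableEq n]

lemma IsHermitian.posSemidef_sub_smul_one {𝕜 : Type*} [RCLike 𝕜] {A : Matrix n n 𝕜}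
    (hA : A.IsHermitian) {c : ℝ} (hc : ∀ i, c ≤ hA.eigenvalues i) :
    (A - (c : 𝕜) • 1).PosSemidef := by
  rw [posSemidef_iff_isHermitian_and_spectrum_nonneg]
  refine ⟨hA.sub (isHermitian_one.smul (RCLike.conj_ofReal c)), ?_⟩
  rw [← Algebra.algebraMap_eq_smul_one, ← spectrum.sub_singleton_eq, hA.spectrum_eq_image_range]
  rintro _ ⟨_, ⟨_, ⟨i, rfl⟩, rfl⟩, _, rfl, rfl⟩
  simp only [Set.mem_ofPred_eq, sub_nonneg]
  exact_mod_cast hc i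

lemma IsHermitian.mul_dotProduct_self_le {A : Matrix n n ℝ} (hA : A.IsHermitian) {c : ℝ}
    (hc : ∀ i, c ≤ hA.eigenvalues i) (v : n → ℝ) :
    c * (v ⬝ᵥ v) ≤ v ⬝ᵥ (A *ᵥ v) := by
  simpa [sub_mulVec, smul_mulVec, dotProduct_smul] using
    (hA.posSemidef_sub_smul_one hc).dotProduct_mulVec_nonneg v

end Matrix

section InsertAt

variable {ι R : Type*} [DecidableEq ι]

def insertAt (j : ι) (a : R) (x : {k // k ≠ j} → R) : ι → R :=
  fun i => if h : i = j then a else x ⟨i, h⟩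

@[simp]
lemma insertAt_self (j : ι) (a : R) (x : {k // k ≠ j} → R) : insertAt j a x j = a :=
  dif_pos rfl

@[simp]
lemma insertAt_coe (j : ι) (a : R) (x : {k // k ≠ j} → R) (k : {k // k ≠ j}) :
    insertAt j a x k = x k :=
  dif_neg k.2

variable [Fintype ι] [NonUnitalNonAssocSemiring R]

lemma dotProduct_insertAt (j : ι) (a b : R) (x y : {k // k ≠ j} → R) :
    insertAt j a x ⬝ᵥ insertAt j b y = a * b + x ⬝ᵥ y := by
  simp only [dotProduct, Fintype.sum_eq_add_sum_subtype_ne _ j, insertAt_self, insertAt_coe]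

lemma mulVec_insertAt_apply (A : Matrix ι ι R) (j : ι) (a : R) (x : {k // k ≠ j} → R) (i : ι) :
    (A *ᵥ insertAt j a x) i = A i j * a + ∑ k : {k // k ≠ j}, A i k * x k := by
  simp only [mulVec, dotProduct, Fintype.sum_eq_add_sum_subtype_ne _ j, insertAt_self,
    insertAt_coe]

end InsertAt

lemma mulVec_insertAt_one_neg_of_normal_eq {ι R : Type*} [Fintype ι] [DecidableEq ι] [CommRing R]
    (S : Matrix ι ι R) (j : ι) {γ : {k // k ≠ j} → R}
    (hγ : S.submatrix Subtype.val Subtype.val *ᵥ γ = fun k : {k // k ≠ j} => S k j) :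
    S *ᵥ insertAt j 1 (-γ) = Pi.single j (S j j - ∑ k : {k // k ≠ j}, S j k * γ k) := by
  ext i
  rw [mulVec_insertAt_apply]
  by_cases hi : i = j
  · subst hi
    simp [sub_eq_add_neg]
  · have hγi := congrFun hγ ⟨i, hi⟩
    simp only [mulVec, dotProduct, submatrix_apply] at hγi
    simp [hi, ← hγi]

lemma one_add_le_sq_and_sqrt_le {s r : ℝ} (hs : 0 ≤ s) (h : 1 + s ≤ r) :
    1 + s ≤ r ^ 2 ∧ √s ≤ r := by
  have hr : 1 + s ≤ r ^ 2 := h.trans (le_self_pow₀ (by linarith) two_ne_zero)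
  exact ⟨hr, Real.sqrt_le_iff.mpr ⟨by linarith, by linarith⟩⟩

theorem nodewise_gamma_norm_bound_general
    {N : ℕ} (Sig : Matrix (Fin N) (Fin N) ℝ)
    (hSig : Sig.PosDef) (j : Fin N)
    (Λmin : ℝ) (hΛ : Λmin = Finset.univ.inf' ⟨j, Finset.mem_univ j⟩ hSig.1.eigenvalues)
    (hΛpos : 0 < Λmin)
    (γ : {k : Fin N // k ≠ j} → ℝ)
    (hγ : γ = (Matrix.of fun k l : {k : Fin N // k ≠ j} =>
        Sig (k : Fin N) (l : Fin N))⁻¹.mulVec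
        (fun k : {k : Fin N // k ≠ j} => Sig (k : Fin N) j))
    (τsq : ℝ)
    (hτ : τsq = Sig j j - ∑ k : {k : Fin N // k ≠ j}, Sig j (k : Fin N) * γ k) :
    1 + ∑ k, (γ k) ^ 2 ≤ τsq ^ 2 / Λmin ^ 2 ∧
      Real.sqrt (∑ k, (γ k) ^ 2) ≤ τsq / Λmin := by
  set A := Sig.submatrix (Subtype.val : {k // k ≠ j} → Fin N) Subtype.val
  have hdet : IsUnit A.det := (hSig.submatrix Subtype.val_injective).isUnit.map detMonoidHom
  have hnormal : A *ᵥ γ = fun k : {k // k ≠ j} => Sig k j := by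
    rw [hγ]
    change A *ᵥ (A⁻¹ *ᵥ _) = _
    rw [mulVec_mulVec, mul_nonsing_inv A hdet, one_mulVec]
  set v := insertAt j 1 (-γ) with hv
  have hquad : v ⬝ᵥ (Sig *ᵥ v) = τsq := by
    rw [hv, mulVec_insertAt_one_neg_of_normal_eq Sig j hnormal, dotProduct_single, insertAt_self,
      one_mul, hτ]
  have hnorm : v ⬝ᵥ v = 1 + ∑ k, γ k ^ 2 := by
    rw [hv, dotProduct_insertAt, one_mul]
    simp only [dotProduct, Pi.neg_apply, neg_mul_neg, sq]
  have hray := hSig.1.mul_dotProduct_self_le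
    (fun i => hΛ ▸ Finset.inf'_le _ (Finset.mem_univ i)) v
  rw [hquad, hnorm] at hray
  have hsum : 1 + ∑ k, γ k ^ 2 ≤ τsq / Λmin := by
    rw [le_div_iff₀ hΛpos]
    linarith
  simpa only [div_pow] using
    one_add_le_sq_and_sqrt_le (Finset.sum_nonneg fun k _ => sq_nonneg (γ k)) hsum

/-- **Norm bound for the population nodewise coefficient vector.**
For a symmetric positive definite `Σ` with smallest eigenvalue `Λ_min > 0`,
with `γ_j = (Σ_{−j,−j})⁻¹Σ_{−j,j}` and the Schur complement `τ_j²`, one has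
`1 + ‖γ_j‖₂² ≤ τ_j⁴ / Λ_min²`, and in particular `‖γ_j‖₂ ≤ τ_j² / Λ_min`. -/
theorem nodewise_gamma_norm_bound
    {N : ℕ} (hN : 2 ≤ N) (Sig : Matrix (Fin N) (Fin N) ℝ)
    (hSig : Sig.PosDef) (j : Fin N)
    (Λmin : ℝ) (hΛ : Λmin = Finset.univ.inf' ⟨j, Finset.mem_univ j⟩ hSig.1.eigenvalues)
    (hΛpos : 0 < Λmin)
    (γ : {k : Fin N // k ≠ j} → ℝ)
    (hγ : γ = (Matrix.of fun k l : {k : Fin N // k ≠ j} =>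
        Sig (k : Fin N) (l : Fin N))⁻¹.mulVec
        (fun k : {k : Fin N // k ≠ j} => Sig (k : Fin N) j))
    (τsq : ℝ)
    (hτ : τsq = Sig j j - ∑ k : {k : Fin N // k ≠ j}, Sig j (k : Fin N) * γ k) :
    1 + ∑ k, (γ k) ^ 2 ≤ τsq ^ 2 / Λmin ^ 2 ∧
      Real.sqrt (∑ k, (γ k) ^ 2) ≤ τsq / Λmin :=
  nodewise_gamma_norm_bound_general Sig hSig j Λmin hΛ hΛpos γ hγ τsq hτ
end

section
/- Deterministic bound on the nodewise noise-level estimate (Lemma B.4, first claim): Fix j, λ_j > 0, 0 ≤ r < 1, and reals ε, δ, s, G, τ_j² ≥ 0. Let γ_j⁰ ∈ ℝ^{N−1}, v_j := x_j − X_{−j}γ_j⁰, let γ̂_j be any minimizer of γ ↦ ‖x_j − X_{−j}γ‖₂²/T + 2λ_j‖γ‖₁, and let τ̂_j² := ‖x_j − X_{−j}γ̂_j‖₂²/T + 2λ_j‖γ̂_j‖₁. Assume (i) |‖v_j‖₂²/T − τ_j²| ≤ ε; (ii) ‖X_{−j}(γ̂_j − γ_j⁰)‖₂²/T + λ_j‖γ̂_j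 − γ_j⁰‖₁ ≤ δ; (iii) max_{k≠j} |v_jᵀx_k| ≤ Tλ_j/4; (iv) Σ_{k≠j} |(γ_j⁰)_k|^r ≤ s; and (v) ‖γ_j⁰‖₂ ≤ G. Then |τ̂_j² − τ_j²| ≤ ε + (7/2)·δ + 2·λ_j^{2−r}·s + 2·λ_j^{1−r/2}·√s·G. -/
/-!
Expanding the square of the residual `x_j − Xγ̂ = v − X(γ̂ − γ⁰)` writes `τ̂²` as
`‖v‖²/T − 2 vᵀX(γ̂ − γ⁰)/T + ‖X(γ̂ − γ⁰)‖²/T + 2λ‖γ̂‖₁`. The first term is within `ε` of `τ²`,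
the cross term is at most `(λ/2)‖γ̂ − γ⁰‖₁` by (iii), and `‖γ̂‖₁ ≤ ‖γ̂ − γ⁰‖₁ + ‖γ⁰‖₁`, so (ii)
controls everything except `λ‖γ⁰‖₁`. That term is bounded by splitting the coordinates of `γ⁰`
at the threshold `λ`: the small ones contribute at most `λ^{1−r}s` to `‖γ⁰‖₁`, and there are at most
`sλ^{−r}` large ones, whose `ℓ₁` norm Cauchy–Schwarz bounds by `√(sλ^{−r})·‖γ⁰‖₂`.
-/

open Finset Matrix

/-- The nodewise lasso objective: `‖x_j − X_{−j}γ‖₂²/T + 2λ_j‖γ‖₁`, where a vector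
`γ : Fin N → ℝ` with `γ j = 0` encodes an element of `ℝ^{N−1}` (the coefficient on
the deleted `j`-th column being forced to zero, so `X_{−j}γ = Xγ`). -/
noncomputable def nodewiseObj {T N : ℕ} (X : Matrix (Fin T) (Fin N) ℝ)
    (j : Fin N) (lam : ℝ) (γ : Fin N → ℝ) : ℝ :=
  (∑ t, (X t j - X.mulVec γ t) ^ 2) / (T : ℝ) + 2 * lam * ∑ k, |γ k|

/-- `|c| ^ r`, except that it vanishes at `c = 0` also for `r = 0` (where `Real.rpow` gives
`0 ^ 0 = 1`), so that `∑ k, absRpow 0 (γ k)` counts the support of `γ`. -/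
noncomputable def absRpow (r c : ℝ) : ℝ := if c = 0 then 0 else |c| ^ r

lemma sum_abs_le_sqrt_card_mul_sqrt_sum_sq {ι : Type*} (t : Finset ι) (γ : ι → ℝ) :
    ∑ k ∈ t, |γ k| ≤ √(#t : ℝ) * √(∑ k ∈ t, γ k ^ 2) := by
  rw [← Real.sqrt_mul (Nat.cast_nonneg _)]
  refine Real.le_sqrt_of_sq_le ?_
  simpa only [sq_abs] using sq_sum_le_card_mul_sum_sq (s := t) (f := fun k => |γ k|)

section WeakSparsity

variable {ι : Type*} [Fintype ι] {lam r s : ℝ}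

lemma absRpow_nonneg (r c : ℝ) : 0 ≤ absRpow r c := by
  unfold absRpow
  split_ifs <;> positivity

lemma abs_le_rpow_mul_absRpow {c : ℝ} (hc : |c| ≤ lam) (hr : r ≤ 1) :
    |c| ≤ lam ^ (1 - r) * absRpow r c := by
  rcases eq_or_ne c 0 with rfl | h0
  · simp [absRpow]
  have hpos : 0 < |c| := abs_pos.mpr h0
  calc |c| = |c| ^ (1 - r) * |c| ^ r := by
        rw [← Real.rpow_add hpos, sub_add_cancel, Real.rpow_one]
    _ ≤ lam ^ (1 - r) * |c| ^ r := by gcongr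
    _ = lam ^ (1 - r) * absRpow r c := by simp [absRpow, h0]

lemma rpow_le_absRpow {c : ℝ} (hlam : 0 ≤ lam) (hr : 0 ≤ r) (hc : lam < |c|) :
    lam ^ r ≤ absRpow r c := by
  have h0 : c ≠ 0 := by rintro rfl; rw [abs_zero] at hc; linarith
  simpa [absRpow, h0] using Real.rpow_le_rpow hlam hc.le hr

lemma sum_abs_filter_le_rpow_mul (γ : ι → ℝ) (hlam : 0 ≤ lam) (hr : r ≤ 1)
    (hs : ∑ k, absRpow r (γ k) ≤ s) :
    ∑ k with |γ k| ≤ lam, |γ k| ≤ lam ^ (1 - r) * s :=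
  calc ∑ k with |γ k| ≤ lam, |γ k|
      ≤ ∑ k with |γ k| ≤ lam, lam ^ (1 - r) * absRpow r (γ k) :=
        sum_le_sum fun k hk => abs_le_rpow_mul_absRpow (mem_filter.mp hk).2 hr
    _ ≤ ∑ k, lam ^ (1 - r) * absRpow r (γ k) :=
        sum_le_sum_of_subset_of_nonneg (filter_subset _ _)
          fun k _ _ => mul_nonneg (by positivity) (absRpow_nonneg _ _)
    _ ≤ lam ^ (1 - r) * s := by rw [← mul_sum]; gcongr

lemma card_filter_mul_rpow_le (γ : ι → ℝ) (hlam : 0 ≤ lam) (hr : 0 ≤ r)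
    (hs : ∑ k, absRpow r (γ k) ≤ s) :
    (#{k | lam < |γ k|} : ℝ) * lam ^ r ≤ s :=
  calc (#{k | lam < |γ k|} : ℝ) * lam ^ r = ∑ k with lam < |γ k|, lam ^ r := by
        rw [sum_const, nsmul_eq_mul]
    _ ≤ ∑ k with lam < |γ k|, absRpow r (γ k) :=
        sum_le_sum fun k hk => rpow_le_absRpow hlam hr (mem_filter.mp hk).2
    _ ≤ ∑ k, absRpow r (γ k) :=
        sum_le_sum_of_subset_of_nonneg (filter_subset _ _) fun k _ _ => absRpow_nonneg _ _
    _ ≤ s := hs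

lemma sqrt_card_filter_le (γ : ι → ℝ) (hlam : 0 < lam) (hr : 0 ≤ r)
    (hs : ∑ k, absRpow r (γ k) ≤ s) :
    √(#{k | lam < |γ k|} : ℝ) ≤ √s * lam ^ (-(r / 2)) := by
  have hcard : (#{k | lam < |γ k|} : ℝ) ≤ s * lam ^ (-r) := by
    rw [Real.rpow_neg hlam.le, ← div_eq_mul_inv,
      le_div_iff₀ (Real.rpow_pos_of_pos hlam r)]
    exact card_filter_mul_rpow_le γ hlam.le hr hs
  calc √(#{k | lam < |γ k|} : ℝ) ≤ √(s * lam ^ (-r)) := Real.sqrt_le_sqrt hcard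
    _ = √s * lam ^ (-(r / 2)) := by
        rw [Real.sqrt_mul' _ (by positivity), Real.sqrt_eq_rpow (lam ^ (-r)),
          ← Real.rpow_mul hlam.le]
        ring_nf

lemma mul_sum_abs_le_of_sum_absRpow_le (γ : ι → ℝ) (hlam : 0 < lam) (hr0 : 0 ≤ r) (hr1 : r ≤ 1)
    (hs : ∑ k, absRpow r (γ k) ≤ s) :
    lam * ∑ k, |γ k| ≤ lam ^ (2 - r) * s + lam ^ (1 - r / 2) * √s * √(∑ k, γ k ^ 2) := by
  have hlarge : ∑ k with lam < |γ k|, |γ k| ≤ √s * lam ^ (-(r / 2)) * √(∑ k, γ k ^ 2) :=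
    calc ∑ k with lam < |γ k|, |γ k|
        ≤ √(#{k | lam < |γ k|} : ℝ) * √(∑ k with lam < |γ k|, γ k ^ 2) :=
          sum_abs_le_sqrt_card_mul_sqrt_sum_sq _ γ
      _ ≤ √s * lam ^ (-(r / 2)) * √(∑ k, γ k ^ 2) := by
          gcongr
          · exact sqrt_card_filter_le γ hlam hr0 hs
          · exact subset_univ _
  have hsmall := sum_abs_filter_le_rpow_mul γ hlam.le hr1 hs
  rw [← sum_filter_add_sum_filter_not univ (fun k => |γ k| ≤ lam)]
  simp only [not_le]
  calc lam * (∑ k with |γ k| ≤ lam, |γ k| + ∑ k with lam < |γ k|, |γ k|)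
      ≤ lam * (lam ^ (1 - r) * s + √s * lam ^ (-(r / 2)) * √(∑ k, γ k ^ 2)) := by
        gcongr
    _ = lam ^ (2 - r) * s + lam ^ (1 - r / 2) * √s * √(∑ k, γ k ^ 2) := by
        rw [show 2 - r = 1 + (1 - r) by ring, show 1 - r / 2 = 1 + -(r / 2) by ring,
          Real.rpow_add hlam, Real.rpow_add hlam, Real.rpow_one]
        ring

end WeakSparsity

lemma abs_dotProduct_le_mul_sum_abs {ι : Type*} [Fintype ι] {a d : ι → ℝ} {M : ℝ} {j : ι}
    (hd : d j = 0) (ha : ∀ k, k ≠ j → |a k| ≤ M) :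
    |d ⬝ᵥ a| ≤ M * ∑ k, |d k| :=
  calc |∑ k, d k * a k| ≤ ∑ k, |d k * a k| := abs_sum_le_sum_abs _ _
    _ ≤ ∑ k, |d k| * M := by
        refine sum_le_sum fun k _ => ?_
        rcases eq_or_ne k j with rfl | hk
        · simp [hd]
        · rw [abs_mul]
          exact mul_le_mul_of_nonneg_left (ha k hk) (abs_nonneg _)
    _ = M * ∑ k, |d k| := by rw [← sum_mul, mul_comm]

lemma nodewiseObj_eq_expand {T N : ℕ} (X : Matrix (Fin T) (Fin N) ℝ) (j : Fin N) (lam : ℝ)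
    (γ γ0 : Fin N → ℝ) (v : Fin T → ℝ) (hv : v = fun t => X t j - X.mulVec γ0 t) :
    nodewiseObj X j lam γ = (∑ t, v t ^ 2) / T - 2 * (v ⬝ᵥ X *ᵥ (γ - γ0) / T)
      + (∑ t, (X *ᵥ (γ - γ0)) t ^ 2) / T + 2 * lam * ∑ k, |γ k| := by
  have hres : ∀ t, X t j - (X *ᵥ γ) t = v t - (X *ᵥ (γ - γ0)) t := by
    intro t
    rw [hv, mulVec_sub, Pi.sub_apply]
    ring
  simp only [nodewiseObj, hres, dotProduct, sub_sq, mul_assoc, sum_add_distrib, sum_sub_distrib,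
    ← mul_sum]
  ring

theorem nodewise_tauhat_bound_general
    {T N : ℕ}
    (X : Matrix (Fin T) (Fin N) ℝ) (j : Fin N)
    (lam r ε δ s G τsq : ℝ)
    (hlam : 0 < lam) (hr0 : 0 ≤ r) (hr1 : r < 1)
    (γ0 γhat : Fin N → ℝ) (hγ0j : γ0 j = 0) (hγhatj : γhat j = 0)
    (v : Fin T → ℝ) (hv : v = fun t => X t j - X.mulVec γ0 t)
    (τhatsq : ℝ) (hτhat : τhatsq = nodewiseObj X j lam γhat)
    -- (i)
    (h1 : |(∑ t, (v t) ^ 2) / (T : ℝ) - τsq| ≤ ε)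
    -- (ii)
    (h2 : (∑ t, (X.mulVec (γhat - γ0) t) ^ 2) / (T : ℝ)
            + lam * ∑ k, |γhat k - γ0 k| ≤ δ)
    -- (iii)
    (h3 : ∀ k, k ≠ j → |∑ t, v t * X t k| ≤ (T : ℝ) * lam / 4)
    -- (iv) weak sparsity of γ_j⁰
    (h4 : ∑ k, (if γ0 k = 0 then (0:ℝ) else |γ0 k| ^ r) ≤ s)
    -- (v)
    (h5 : Real.sqrt (∑ k, (γ0 k) ^ 2) ≤ G) :
    |τhatsq - τsq| ≤ ε + (7 / 2) * δ + 2 * lam ^ (2 - r) * s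
      + 2 * lam ^ (1 - r / 2) * Real.sqrt s * G := by
  set D := ∑ k, |γhat k - γ0 k|
  have hcross : |v ⬝ᵥ X *ᵥ (γhat - γ0) / T| ≤ lam / 4 * D := by
    have hC : |(γhat - γ0) ⬝ᵥ (v ᵥ* X)| ≤ T * lam / 4 * D :=
      abs_dotProduct_le_mul_sum_abs (by simp [hγhatj, hγ0j]) h3
    rw [abs_div, Nat.abs_cast, dotProduct_mulVec, dotProduct_comm]
    exact div_le_of_le_mul₀ (Nat.cast_nonneg _) (by positivity) (by linarith)
  have htriangle : ∑ k, |γhat k| ≤ D + ∑ k, |γ0 k| := by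
    rw [← sum_add_distrib]
    exact sum_le_sum fun k _ => by linarith [abs_sub_abs_le_abs_sub (γhat k) (γ0 k)]
  have hsparse : lam * ∑ k, |γ0 k| ≤ lam ^ (2 - r) * s + lam ^ (1 - r / 2) * √s * G :=
    (mul_sum_abs_le_of_sum_absRpow_le γ0 hlam hr0 hr1.le h4).trans (by gcongr)
  have hQ : 0 ≤ (∑ t, (X *ᵥ (γhat - γ0)) t ^ 2) / T := by positivity
  have hlamD : 0 ≤ lam * D := by positivity
  have hlamL1 : 0 ≤ lam * ∑ k, |γ0 k| := by positivity
  have hlamL1hat : 0 ≤ lam * ∑ k, |γhat k| := by positivity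
  have hlam_triangle := mul_le_mul_of_nonneg_left htriangle hlam.le
  obtain ⟨h1l, h1u⟩ := abs_le.mp h1
  obtain ⟨hcl, hcu⟩ := abs_le.mp hcross
  rw [hτhat, nodewiseObj_eq_expand X j lam γhat γ0 v hv, abs_le]
  constructor <;> linarith

/-- **Deterministic bound on the nodewise noise-level estimate (Lemma B.4, first claim).**
`|c|^0` is read as 1 if `c ≠ 0` and 0 otherwise. -/
theorem nodewise_tauhat_bound
    {T N : ℕ} (hT : 0 < T) (hN : 2 ≤ N)
    (X : Matrix (Fin T) (Fin N) ℝ) (j : Fin N)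
    (lam r ε δ s G τsq : ℝ)
    (hlam : 0 < lam) (hr0 : 0 ≤ r) (hr1 : r < 1)
    (hε : 0 ≤ ε) (hδ : 0 ≤ δ) (hs : 0 ≤ s) (hG : 0 ≤ G) (hτsq : 0 ≤ τsq)
    (γ0 γhat : Fin N → ℝ) (hγ0j : γ0 j = 0) (hγhatj : γhat j = 0)
    (v : Fin T → ℝ) (hv : v = fun t => X t j - X.mulVec γ0 t)
    (hmin : ∀ γ : Fin N → ℝ, γ j = 0 →
      nodewiseObj X j lam γhat ≤ nodewiseObj X j lam γ)
    (τhatsq : ℝ) (hτhat : τhatsq = nodewiseObj X j lam γhat)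
    -- (i)
    (h1 : |(∑ t, (v t) ^ 2) / (T : ℝ) - τsq| ≤ ε)
    -- (ii)
    (h2 : (∑ t, (X.mulVec (γhat - γ0) t) ^ 2) / (T : ℝ)
            + lam * ∑ k, |γhat k - γ0 k| ≤ δ)
    -- (iii)
    (h3 : ∀ k, k ≠ j → |∑ t, v t * X t k| ≤ (T : ℝ) * lam / 4)
    -- (iv) weak sparsity of γ_j⁰
    (h4 : ∑ k, (if γ0 k = 0 then (0:ℝ) else |γ0 k| ^ r) ≤ s)
    -- (v)
    (h5 : Real.sqrt (∑ k, (γ0 k) ^ 2) ≤ G) :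
    |τhatsq - τsq| ≤ ε + (7 / 2) * δ + 2 * lam ^ (2 - r) * s
      + 2 * lam ^ (1 - r / 2) * Real.sqrt s * G :=
  nodewise_tauhat_bound_general X j lam r ε δ s G τsq hlam hr0 hr1 γ0 γhat hγ0j hγhatj v hv τhatsq
    hτhat h1 h2 h3 h4 h5
end
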